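/- arXiv:1203.1136 — 2 statements merged into one kernel-verified Lean document; each statement's English description precedes it below -/
import Mathlib

section
/- The Wick-ordered power of a Segal field satisfies :Φ(f)^n: = Σ_{k=0}^{[n/2]} (n!/(k!(n-2k)!)) Φ(f)^{n-2k} (−‖f‖²/4)^k on the finite particle subspace. -/
open scoped ComplexInnerProductSpace

/-!
With `c = -‖f‖²/4` the recursion reads `W (n+2) = Φ W (n+1) + 2(n+1) c W n`. The integer
coefficients `a n k = C(n, 2k) (2k)!/k! = n!/(k!(n-2k)!)` satisfy
`a (n+2) (k+1) = a (n+1) (k+1) + 2(n+1) a n k` (Pascal's rule plus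
`(2k+1) C(n+1, 2k+1) = (n+1) C(n, 2k)`), which is the same recursion read coefficientwise.
Because `C(n, 2k)` vanishes for `2k > n`, every sum may be taken over one common range, so the
index shift works uniformly in the parity of `n`.
-/

open Finset
open scoped Nat

lemma Nat.two_mul_succ_descFactorial_succ (k : ℕ) :
    (2 * (k + 1)).descFactorial (k + 1) = 2 * (2 * k + 1) * (2 * k).descFactorial k := by
  have h₁ := succ_descFactorial_succ (2 * k + 1) k
  have h₂ := succ_descFactorial (2 * k) k
  rw [show 2 * k + 1 - k = k + 1 by omega] at h₂
  rw [show 2 * (k + 1) = 2 * k + 1 + 1 by ring, h₁]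
  refine Nat.eq_of_mul_eq_mul_left (show 0 < k + 1 by omega) ?_
  calc (k + 1) * ((2 * k + 1 + 1) * (2 * k + 1).descFactorial k)
      = (2 * k + 1 + 1) * ((k + 1) * (2 * k + 1).descFactorial k) := by ring
    _ = _ := by rw [h₂]; ring

def wickCoeff (n k : ℕ) : ℕ := n.choose (2 * k) * (2 * k).descFactorial k

namespace wickCoeff

@[simp] lemma zero_right (n : ℕ) : wickCoeff n 0 = 1 := by simp [wickCoeff]

lemma eq_zero_of_lt {n k : ℕ} (h : n < 2 * k) : wickCoeff n k = 0 := by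
  simp [wickCoeff, Nat.choose_eq_zero_of_lt h]

lemma add_two_succ (n k : ℕ) :
    wickCoeff (n + 2) (k + 1) = wickCoeff (n + 1) (k + 1) + 2 * (n + 1) * wickCoeff n k := by
  have hchoose := Nat.add_one_mul_choose_eq n (2 * k)
  simp only [wickCoeff, Nat.two_mul_succ_descFactorial_succ]
  rw [show 2 * (k + 1) = 2 * k + 1 + 1 by ring, Nat.choose_succ_succ' (n + 1), add_mul, add_comm]
  congr 1
  calc (n + 1).choose (2 * k + 1) * (2 * (2 * k + 1) * (2 * k).descFactorial k)
      = 2 * ((n + 1).choose (2 * k + 1) * (2 * k + 1)) * (2 * k).descFactorial k := by ring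
    _ = _ := by rw [← hchoose]; ring

lemma mul_factorial_mul_factorial {n k : ℕ} (h : 2 * k ≤ n) :
    wickCoeff n k * k ! * (n - 2 * k)! = n ! := by
  have hdesc := Nat.factorial_mul_descFactorial (show k ≤ 2 * k by omega)
  rw [show 2 * k - k = k by omega] at hdesc
  rw [← Nat.choose_mul_factorial_mul_factorial h, ← hdesc, wickCoeff]
  ring

lemma cast_eq_factorial_div {K : Type*} [Field K] [CharZero K] {n k : ℕ} (h : 2 * k ≤ n) :
    (wickCoeff n k : K) = n ! / (k ! * (n - 2 * k)!) := by
  rw [eq_div_iff (by simp [Nat.factorial_ne_zero]), ← mul_assoc]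
  exact_mod_cast mul_factorial_mul_factorial h

end wickCoeff

section WickSum

variable {R M : Type*} [CommSemiring R] [Semiring M] [Algebra R M] (Φ : M) (c : R)

def wickTerm (n k : ℕ) : M := ((wickCoeff n k : R) * c ^ k) • Φ ^ (n - 2 * k)

def wickSum (n : ℕ) : M := ∑ k ∈ range (n / 2 + 1), wickTerm Φ c n k

lemma wickTerm_eq_zero_of_lt {n k : ℕ} (h : n < 2 * k) : wickTerm Φ c n k = 0 := by
  simp [wickTerm, wickCoeff.eq_zero_of_lt h]

lemma wickSum_eq_sum_range {n N : ℕ} (hN : n / 2 + 1 ≤ N) :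
    wickSum Φ c n = ∑ k ∈ range N, wickTerm Φ c n k :=
  sum_subset (range_subset_range.2 hN) fun k hkN hk ↦
    wickTerm_eq_zero_of_lt Φ c (by simp only [mem_range] at hk hkN; omega)

lemma mul_wickTerm (n k : ℕ) :
    Φ * wickTerm Φ c n k = ((wickCoeff n k : R) * c ^ k) • Φ ^ (n + 1 - 2 * k) := by
  rcases lt_or_ge n (2 * k) with h | h
  · simp [wickTerm, wickCoeff.eq_zero_of_lt h]
  · rw [wickTerm, mul_smul_comm, ← _root_.pow_succ', Nat.sub_add_comm h]

lemma wickTerm_add_two_succ (n k : ℕ) :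
    wickTerm Φ c (n + 2) (k + 1) =
      Φ * wickTerm Φ c (n + 1) (k + 1) + (2 * (n + 1) * c) • wickTerm Φ c n k := by
  rw [mul_wickTerm, wickTerm, wickTerm, smul_smul, show n + 2 - 2 * (k + 1) = n - 2 * k by omega,
    ← add_smul, wickCoeff.add_two_succ]
  congr 1
  push_cast
  ring

lemma wickSum_add_two (n : ℕ) :
    wickSum Φ c (n + 2) = Φ * wickSum Φ c (n + 1) + (2 * (n + 1) * c) • wickSum Φ c n := by
  rw [wickSum_eq_sum_range Φ c (N := n / 2 + 1 + 1) (by omega),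
    wickSum_eq_sum_range Φ c (n := n + 1) (N := n / 2 + 1 + 1) (by omega), wickSum, mul_sum,
    smul_sum, sum_range_succ', sum_range_succ' (fun k ↦ Φ * _)]
  simp only [wickTerm_add_two_succ, sum_add_distrib, mul_wickTerm]
  simp only [wickTerm, wickCoeff.zero_right, Nat.cast_one, pow_zero, mul_one, mul_zero, tsub_zero,
    one_smul]
  abel

theorem eq_wickSum_of_recursion {W : ℕ → M} (h₀ : W 0 = 1) (h₁ : W 1 = Φ)
    (hrec : ∀ n : ℕ, W (n + 2) = Φ * W (n + 1) + (2 * (n + 1) * c) • W n) :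
    ∀ n, W n = wickSum Φ c n
  | 0 => by simp [h₀, wickSum, wickTerm]
  | 1 => by simp [h₁, wickSum, wickTerm]
  | n + 2 => by
    rw [hrec, wickSum_add_two, eq_wickSum_of_recursion h₀ h₁ hrec n,
      eq_wickSum_of_recursion h₀ h₁ hrec (n + 1)]

end WickSum

theorem wick_power_formula_general
    {𝓗 F : Type*} [NormedAddCommGroup 𝓗] [InnerProductSpace ℂ 𝓗]
    [NormedAddCommGroup F] [InnerProductSpace ℂ F]
    (fin : Submodule ℂ F)
    (f : 𝓗)
    (Φ : Module.End ℂ fin)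
    (W : ℕ → Module.End ℂ fin)
    (hW0 : W 0 = 1)
    (hW1 : W 1 = Φ)
    (hWrec : ∀ n : ℕ,
      W (n + 2) = Φ * W (n + 1) - ((((n : ℂ) + 1) / 2) * ⟪f, f⟫) • W n) :
    ∀ n : ℕ, W n = ∑ k ∈ Finset.range (n / 2 + 1),
      ((n.factorial : ℂ) / ((k.factorial : ℂ) * ((n - 2 * k).factorial : ℂ))
        * (-(((‖f‖ : ℝ) : ℂ) ^ 2) / 4) ^ k) • Φ ^ (n - 2 * k) := by
  have hrec (n : ℕ) :
      W (n + 2) = Φ * W (n + 1) + (2 * (n + 1) * (-(((‖f‖ : ℝ) : ℂ) ^ 2) / 4)) • W n := by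
    rw [hWrec, inner_self_eq_norm_sq_to_K]
    module
  intro n
  rw [eq_wickSum_of_recursion Φ _ hW0 hW1 hrec n, wickSum]
  refine sum_congr rfl fun k hk ↦ ?_
  rw [wickTerm, wickCoeff.cast_eq_factorial_div (by simp only [mem_range] at hk; omega)]

/-- The Wick-ordered power of a Segal field satisfies
`:Φ(f)ⁿ: = Σ_{k=0}^{[n/2]} n!/(k!(n-2k)!) Φ(f)^{n-2k} (-‖f‖²/4)ᵏ`
on the finite particle subspace.

Here `Φ = (1/√2)(a*(f̄) + a(f))` is the Segal field and the Wick powers `W n = :Φ(f)ⁿ:`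
are characterized by the recursion `:Φ(f):= Φ(f)` and
`:Φ(f)^{n+2}: = Φ(f):Φ(f)^{n+1}: - ((n+1)/2)(f,f):Φ(f)ⁿ:`, which is the specialization of
the recursive definition of the Wick product to equal arguments. -/
theorem wick_power_formula
    {𝓗 F : Type*} [NormedAddCommGroup 𝓗] [InnerProductSpace ℂ 𝓗]
    [NormedAddCommGroup F] [InnerProductSpace ℂ F]
    (conj : 𝓗 → 𝓗)
    (fin : Submodule ℂ F)
    (ann cre : 𝓗 →ₗ[ℂ] Module.End ℂ fin)
    (f : 𝓗)
    (Φ : Module.End ℂ fin)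
    (hΦ : Φ = (((Real.sqrt 2 : ℝ) : ℂ))⁻¹ • (cre (conj f) + ann f))
    (W : ℕ → Module.End ℂ fin)
    (hW0 : W 0 = 1)
    (hW1 : W 1 = Φ)
    (hWrec : ∀ n : ℕ,
      W (n + 2) = Φ * W (n + 1) - ((((n : ℂ) + 1) / 2) * ⟪f, f⟫) • W n) :
    ∀ n : ℕ, W n = ∑ k ∈ Finset.range (n / 2 + 1),
      ((n.factorial : ℂ) / ((k.factorial : ℂ) * ((n - 2 * k).factorial : ℂ))
        * (-(((‖f‖ : ℝ) : ℂ) ^ 2) / 4) ^ k) • Φ ^ (n - 2 * k) :=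
  wick_power_formula_general fin f Φ W hW0 hW1 hWrec
end

section
/- Let A = [[S, T̄],[T, S̄]] be a symplectic matrix, i.e., satisfying A J A* = A* J A = J. Then the algebraic relations S*S − T*T = 1, S̄*T − T̄*S = 0, S S* − (T T*)‾ = 1, and T S* − (S T*)‾ = 0 hold, the operator S is invertible with bounded inverse, ‖TS^{-1}‖ < 1, and TS^{-1} is symmetric in the sense (TS^{-1})^T = TS^{-1} where X^T = C X* C for a conjugation C. -/
noncomputable section

variable {𝓗 : Type*} [NormedAddCommGroup 𝓗] [InnerProductSpace ℂ 𝓗] [CompleteSpace 𝓗]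

/-- The block operator `[[S, Tb],[T, Sb]]` on the Hilbert space direct sum `𝓗 ⊕ 𝓗`
(realized as `WithLp 2 (𝓗 × 𝓗)`). -/
def blockOp (S Tb T Sb : 𝓗 →L[ℂ] 𝓗) : WithLp 2 (𝓗 × 𝓗) →L[ℂ] WithLp 2 (𝓗 × 𝓗) :=
  ((WithLp.prodContinuousLinearEquiv (p := 2) (𝕜 := ℂ) (α := 𝓗) (β := 𝓗)).symm :
      (𝓗 × 𝓗) →L[ℂ] WithLp 2 (𝓗 × 𝓗)) ∘L
    (((S ∘L ContinuousLinearMap.fst ℂ 𝓗 𝓗) + (Tb ∘L ContinuousLinearMap.snd ℂ 𝓗 𝓗)).prod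
      ((T ∘L ContinuousLinearMap.fst ℂ 𝓗 𝓗) + (Sb ∘L ContinuousLinearMap.snd ℂ 𝓗 𝓗))) ∘L
    ((WithLp.prodContinuousLinearEquiv (p := 2) (𝕜 := ℂ) (α := 𝓗) (β := 𝓗)) :
      WithLp 2 (𝓗 × 𝓗) →L[ℂ] (𝓗 × 𝓗))

/-!
The algebraic relations are the entries of the block identities `A* J A = J` and `A J A* = J`,
rewritten with `(X̄)* = (X*)‾`, which holds because `C` is an antiunitary involution. The
diagonal entries `S*S = 1 + T*T` and `SS* = 1 + T̄T̄*` make `S` and `S*` bounded below, so `S` is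
invertible. Then `‖TS⁻¹x‖² = ‖x‖² - ‖S⁻¹x‖²`, and `‖x‖ ≤ ‖S‖ ‖S⁻¹x‖` bounds this by
`(1 - c) ‖x‖²` with `c = (1 + ‖S‖²)⁻¹`. Finally the off-diagonal entry `S̄*T = T̄*S` reads `SᵀT = TᵀS`, which
gives `(TS⁻¹)ᵀ = TS⁻¹` after multiplying by `(S⁻¹)ᵀ` on the left and `S⁻¹` on the right.
-/

open ContinuousLinearMap
open scoped InnerProductSpace

section BlockOperators

omit [CompleteSpace 𝓗] in
@[simp]
lemma ofLp_blockOp_apply (S Tb T Sb : 𝓗 →L[ℂ] 𝓗) (x : WithLp 2 (𝓗 × 𝓗)) :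
    (blockOp S Tb T Sb x).ofLp = (S x.ofLp.1 + Tb x.ofLp.2, T x.ofLp.1 + Sb x.ofLp.2) :=
  rfl

omit [CompleteSpace 𝓗] in
lemma blockOp_comp_blockOp (S Tb T Sb S' Tb' T' Sb' : 𝓗 →L[ℂ] 𝓗) :
    blockOp S Tb T Sb ∘L blockOp S' Tb' T' Sb' =
      blockOp (S ∘L S' + Tb ∘L T') (S ∘L Tb' + Tb ∘L Sb')
        (T ∘L S' + Sb ∘L T') (T ∘L Tb' + Sb ∘L Sb') := by
  ext x : 1
  apply WithLp.ofLp_injective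
  simp only [comp_apply, ofLp_blockOp_apply, add_apply, map_add, Prod.mk.injEq]
  constructor <;> abel

omit [CompleteSpace 𝓗] in
lemma blockOp_inj {S Tb T Sb S' Tb' T' Sb' : 𝓗 →L[ℂ] 𝓗} :
    blockOp S Tb T Sb = blockOp S' Tb' T' Sb' ↔ S = S' ∧ Tb = Tb' ∧ T = T' ∧ Sb = Sb' := by
  refine ⟨fun h => ?_, by rintro ⟨rfl, rfl, rfl, rfl⟩; rfl⟩
  have h₁ (v : 𝓗) := congr_arg (fun A => (A (WithLp.toLp 2 (v, 0))).ofLp) h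
  have h₂ (v : 𝓗) := congr_arg (fun A => (A (WithLp.toLp 2 (0, v))).ofLp) h
  simp only [ofLp_blockOp_apply, map_zero, add_zero, zero_add, Prod.mk.injEq] at h₁ h₂
  exact ⟨ext fun v => (h₁ v).1, ext fun v => (h₂ v).1, ext fun v => (h₁ v).2,
    ext fun v => (h₂ v).2⟩

lemma adjoint_blockOp (S Tb T Sb : 𝓗 →L[ℂ] 𝓗) :
    adjoint (blockOp S Tb T Sb) = blockOp (adjoint S) (adjoint T) (adjoint Tb) (adjoint Sb) := by
  refine ((eq_adjoint_iff _ _).2 fun x y => ?_).symm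
  simp only [WithLp.prod_inner_apply, ofLp_blockOp_apply, inner_add_left, inner_add_right,
    adjoint_inner_left]
  ring

lemma blockOp_comp_J_comp_adjoint (S Tb T Sb : 𝓗 →L[ℂ] 𝓗) :
    blockOp S Tb T Sb ∘L blockOp 1 0 0 (-1) ∘L adjoint (blockOp S Tb T Sb) =
      blockOp (S ∘L adjoint S - Tb ∘L adjoint Tb) (S ∘L adjoint T - Tb ∘L adjoint Sb)
        (T ∘L adjoint S - Sb ∘L adjoint Tb) (T ∘L adjoint T - Sb ∘L adjoint Sb) := by
  simp only [adjoint_blockOp, blockOp_comp_blockOp, one_def, id_comp, zero_comp, add_zero,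
    zero_add, neg_comp, comp_neg, sub_eq_add_neg]

lemma adjoint_comp_J_comp_blockOp (S Tb T Sb : 𝓗 →L[ℂ] 𝓗) :
    adjoint (blockOp S Tb T Sb) ∘L blockOp 1 0 0 (-1) ∘L blockOp S Tb T Sb =
      blockOp (adjoint S ∘L S - adjoint T ∘L T) (adjoint S ∘L Tb - adjoint T ∘L Sb)
        (adjoint Tb ∘L S - adjoint Sb ∘L T) (adjoint Tb ∘L Tb - adjoint Sb ∘L Sb) := by
  simp only [adjoint_blockOp, blockOp_comp_blockOp, one_def, id_comp, zero_comp, add_zero,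
    zero_add, neg_comp, comp_neg, sub_eq_add_neg]

end BlockOperators

section Conjugation

variable {E F : Type*} [NormedAddCommGroup E] [InnerProductSpace ℂ E]
  [NormedAddCommGroup F] [InnerProductSpace ℂ F]

theorem LinearIsometry.inner_map_map_of_antilinear (C : E →ₗᵢ⋆[ℂ] F) (x y : E) :
    ⟪C x, C y⟫_ℂ = ⟪y, x⟫_ℂ := by
  have re_inner_map_map (u v : E) : (⟪C u, C v⟫_ℂ).re = (⟪u, v⟫_ℂ).re := by
    simp only [← RCLike.re_to_complex, re_inner_eq_norm_add_mul_self_sub_norm_sub_mul_self_div_four,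
      ← map_add, ← map_sub, LinearIsometry.norm_map]
  -- the imaginary parts are real parts after replacing `y` by `-I • y`
  have hI : C ((-Complex.I) • y) = Complex.I • C y := by simp [LinearIsometry.map_smulₛₗ]
  have im_eq := re_inner_map_map x ((-Complex.I) • y)
  rw [hI, inner_smul_right, inner_smul_right] at im_eq
  simp only [Complex.mul_re, Complex.I_re, Complex.I_im, Complex.neg_re, Complex.neg_im] at im_eq
  apply Complex.ext
  · rw [re_inner_map_map, ← inner_conj_symm, Complex.conj_re]
  · rw [← inner_conj_symm y x, Complex.conj_im]
    linarith

theorem adjoint_apply_eq_conj_of_apply_eq_conj [CompleteSpace E] [CompleteSpace F]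
    (C : E →ₗᵢ⋆[ℂ] E) (D : F →ₗᵢ⋆[ℂ] F) (hC : Function.Involutive C)
    (hD : Function.Involutive D) {X Y : E →L[ℂ] F} (hY : ∀ x, Y x = D (X (C x))) (y : F) :
    adjoint Y y = C (adjoint X (D y)) := by
  refine ext_inner_right ℂ fun v => ?_
  calc ⟪adjoint Y y, v⟫_ℂ = ⟪D (D y), D (X (C v))⟫_ℂ := by rw [adjoint_inner_left, hD, hY]
    _ = ⟪C v, adjoint X (D y)⟫_ℂ := by
      rw [D.inner_map_map_of_antilinear, adjoint_inner_right]
    _ = ⟪C (adjoint X (D y)), v⟫_ℂ := by rw [← C.inner_map_map_of_antilinear, hC]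

end Conjugation

theorem ContinuousLinearMap.opNorm_lt_one_of_norm_sq_add_mul_norm_sq_le {𝕜 E F : Type*}
    [NontriviallyNormedField 𝕜] [SeminormedAddCommGroup E] [NormedSpace 𝕜 E]
    [SeminormedAddCommGroup F] [NormedSpace 𝕜 F] {R : E →L[𝕜] F} {c : ℝ} (hc : 0 < c)
    (h : ∀ x, ‖R x‖ ^ 2 + c * ‖x‖ ^ 2 ≤ ‖x‖ ^ 2) : ‖R‖ < 1 := by
  refine (R.opNorm_le_bound (Real.sqrt_nonneg (1 - c)) fun x => ?_).trans_lt ?_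
  · calc ‖R x‖ = √(‖R x‖ ^ 2) := (Real.sqrt_sq (norm_nonneg _)).symm
      _ ≤ √((1 - c) * ‖x‖ ^ 2) := Real.sqrt_le_sqrt (by linarith [h x])
      _ = √(1 - c) * ‖x‖ := by rw [Real.sqrt_mul' _ (sq_nonneg _), Real.sqrt_sq (norm_nonneg _)]
  · rw [Real.sqrt_lt' one_pos]
    linarith

section Adjoint

variable {𝕜 E F G : Type*} [RCLike 𝕜] [NormedAddCommGroup E] [InnerProductSpace 𝕜 E]
  [NormedAddCommGroup F] [InnerProductSpace 𝕜 F] [NormedAddCommGroup G] [InnerProductSpace 𝕜 G]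
  [CompleteSpace E] [CompleteSpace F] [CompleteSpace G]

theorem norm_sq_add_norm_sq_eq_of_adjoint_comp_self_sub {S : E →L[𝕜] F} {T : E →L[𝕜] G}
    (h : adjoint S ∘L S - adjoint T ∘L T = 1) (x : E) : ‖x‖ ^ 2 + ‖T x‖ ^ 2 = ‖S x‖ ^ 2 := by
  have := congr_arg (fun A : E →L[𝕜] E => RCLike.re ⟪A x, x⟫_𝕜) h
  simp only [sub_apply, inner_sub_left, map_sub, ← apply_norm_sq_eq_inner_adjoint_left,
    one_apply_eq_self, inner_self_eq_norm_sq] at this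
  linarith

theorem antilipschitzWith_one_of_adjoint_comp_self_sub {S : E →L[𝕜] F} {T : E →L[𝕜] G}
    (h : adjoint S ∘L S - adjoint T ∘L T = 1) : AntilipschitzWith 1 S :=
  S.antilipschitz_of_bound fun x => by
    rw [NNReal.coe_one, one_mul]
    refine le_of_pow_le_pow_left₀ two_ne_zero (norm_nonneg _) ?_
    linarith [norm_sq_add_norm_sq_eq_of_adjoint_comp_self_sub h x, sq_nonneg ‖T x‖]

theorem norm_comp_rightInverse_lt_one_of_adjoint_comp_self_sub {S : E →L[𝕜] F}
    {T : E →L[𝕜] G} {S' : F →L[𝕜] E} (h : adjoint S ∘L S - adjoint T ∘L T = 1)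
    (hS' : S ∘L S' = 1) : ‖T ∘L S'‖ < 1 := by
  refine opNorm_lt_one_of_norm_sq_add_mul_norm_sq_le (c := (1 + ‖S‖ ^ 2)⁻¹) (by positivity)
    fun x => ?_
  have hx : S (S' x) = x := congr($hS' x)
  have hsum := norm_sq_add_norm_sq_eq_of_adjoint_comp_self_sub h (S' x)
  rw [hx] at hsum
  have hle : ‖x‖ ≤ ‖S‖ * ‖S' x‖ := by
    calc ‖x‖ = ‖S (S' x)‖ := by rw [hx]
      _ ≤ ‖S‖ * ‖S' x‖ := S.le_opNorm (S' x)
  have hfrac : (1 + ‖S‖ ^ 2)⁻¹ * ‖x‖ ^ 2 ≤ ‖S' x‖ ^ 2 := by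
    rw [inv_mul_le_iff₀ (by positivity)]
    nlinarith [pow_le_pow_left₀ (norm_nonneg x) hle 2, sq_nonneg ‖S' x‖]
  rw [comp_apply]
  linarith

theorem isUnit_of_antilipschitz_of_injective_adjoint {S : E →L[𝕜] E} {K : NNReal}
    (hS : AntilipschitzWith K S) (hS' : Function.Injective (adjoint S)) : IsUnit S := by
  refine isUnit_iff_bijective.2 ⟨hS.injective, LinearMap.range_eq_top.1 ?_⟩
  have hclosed : IsClosed ((S : E →ₗ[𝕜] E).range : Set E) := by
    rw [LinearMap.coe_range]
    exact hS.isClosed_range S.uniformContinuous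
  rw [← hclosed.submodule_topologicalClosure_eq, Submodule.topologicalClosure_eq_top_iff,
    orthogonal_range, LinearMap.ker_eq_bot]
  exact hS'

theorem comp_rightInverse_apply_eq_conj_adjoint {C : E → E} (hC : Function.Involutive C)
    {S T S' : E →L[𝕜] E} (h : ∀ y, adjoint S (C (T y)) = adjoint T (C (S y)))
    (hS' : S ∘L S' = 1) (x : E) : (T ∘L S') x = C (adjoint (T ∘L S') (C x)) := by
  have hS'adj : adjoint S' ∘L adjoint S = 1 := by
    rw [← adjoint_comp, hS', one_def, adjoint_id, ← one_def]
  calc (T ∘L S') x = C (C (T (S' x))) := (hC _).symm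
    _ = C ((adjoint S' ∘L adjoint S) (C (T (S' x)))) := by rw [hS'adj, one_apply_eq_self]
    _ = C (adjoint S' (adjoint T (C (S (S' x))))) := by rw [comp_apply, h]
    _ = C (adjoint (T ∘L S') (C x)) := by
      rw [← comp_apply S S', hS', one_apply_eq_self, adjoint_comp, comp_apply]

end Adjoint

/-- Let `A = [[S, T̄],[T, S̄]]` be symplectic, i.e. `A J A* = A* J A = J`
with `J = diag(1, -1)`.  Then `S*S - T*T = 1`, `S̄*T - T̄*S = 0`, `SS* - (TT*)‾ = 1`,
`TS* - (ST*)‾ = 0`, the operator `S` is invertible with bounded inverse, `‖TS⁻¹‖ < 1`,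
and `TS⁻¹` is symmetric in the sense `(TS⁻¹)ᵀ = TS⁻¹` where `Xᵀ = C X* C` for the
conjugation `C` (here the function `conj`). -/
theorem symplectic_algebraic_relations
    (conj : 𝓗 → 𝓗)
    (hconj_add : ∀ x y, conj (x + y) = conj x + conj y)
    (hconj_smul : ∀ (c : ℂ) x, conj (c • x) = (starRingEnd ℂ) c • conj x)
    (hconj_inv : ∀ x, conj (conj x) = x)
    (hconj_norm : ∀ x, ‖conj x‖ = ‖x‖)
    (S T Sb Tb : 𝓗 →L[ℂ] 𝓗)
    (hSb : ∀ x, Sb x = conj (S (conj x)))    -- Sb = S̄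
    (hTb : ∀ x, Tb x = conj (T (conj x)))    -- Tb = T̄
    -- the symplectic condition A J A* = A* J A = J
    (hsymp1 : blockOp S Tb T Sb ∘L blockOp 1 0 0 (-1) ∘L
        ContinuousLinearMap.adjoint (blockOp S Tb T Sb) = blockOp 1 0 0 (-1))
    (hsymp2 : ContinuousLinearMap.adjoint (blockOp S Tb T Sb) ∘L blockOp 1 0 0 (-1) ∘L
        blockOp S Tb T Sb = blockOp 1 0 0 (-1)) :
    (ContinuousLinearMap.adjoint S ∘L S - ContinuousLinearMap.adjoint T ∘L T = 1) ∧
    (ContinuousLinearMap.adjoint Sb ∘L T - ContinuousLinearMap.adjoint Tb ∘L S = 0) ∧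
    (∀ x, S (ContinuousLinearMap.adjoint S x)
        - conj (T (ContinuousLinearMap.adjoint T (conj x))) = x) ∧
    (∀ x, T (ContinuousLinearMap.adjoint S x)
        - conj (S (ContinuousLinearMap.adjoint T (conj x))) = 0) ∧
    (∃ Sinv : 𝓗 →L[ℂ] 𝓗, S ∘L Sinv = 1 ∧ Sinv ∘L S = 1 ∧
      ‖T ∘L Sinv‖ < 1 ∧
      ∀ x, (T ∘L Sinv) x = conj (ContinuousLinearMap.adjoint (T ∘L Sinv) (conj x))) := by
  let C : 𝓗 →ₗᵢ⋆[ℂ] 𝓗 :=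
    { toFun := conj, map_add' := hconj_add, map_smul' := hconj_smul, norm_map' := hconj_norm }
  have hC : Function.Involutive C := hconj_inv
  have hSbadj : ∀ x, adjoint Sb x = conj (adjoint S (conj x)) :=
    adjoint_apply_eq_conj_of_apply_eq_conj C C hC hC hSb
  have hTbadj : ∀ x, adjoint Tb x = conj (adjoint T (conj x)) :=
    adjoint_apply_eq_conj_of_apply_eq_conj C C hC hC hTb
  obtain ⟨hSS, -, hTS, -⟩ := blockOp_inj.1 ((adjoint_comp_J_comp_blockOp ..).symm.trans hsymp2)
  obtain ⟨hSS', -, hTS', -⟩ := blockOp_inj.1 ((blockOp_comp_J_comp_adjoint ..).symm.trans hsymp1)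
  have hSbT : adjoint Sb ∘L T - adjoint Tb ∘L S = 0 := by rw [← neg_sub, hTS, neg_zero]
  have hSSadj' : adjoint (adjoint S) ∘L adjoint S - adjoint (adjoint Tb) ∘L adjoint Tb = 1 := by
    simpa only [adjoint_adjoint] using hSS'
  have hS : IsUnit S := isUnit_of_antilipschitz_of_injective_adjoint
    (antilipschitzWith_one_of_adjoint_comp_self_sub hSS)
    (antilipschitzWith_one_of_adjoint_comp_self_sub hSSadj').injective
  refine ⟨hSS, hSbT, fun x => ?_, fun x => ?_, ↑hS.unit⁻¹, hS.mul_val_inv, hS.val_inv_mul,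
    norm_comp_rightInverse_lt_one_of_adjoint_comp_self_sub hSS hS.mul_val_inv,
    comp_rightInverse_apply_eq_conj_adjoint hC (fun y => hC.injective ?_) hS.mul_val_inv⟩
  · simpa only [sub_apply, comp_apply, one_apply_eq_self, hTb, hTbadj, hconj_inv]
      using congr($hSS' x)
  · simpa only [sub_apply, comp_apply, zero_apply, hSb, hTbadj, hconj_inv] using congr($hTS' x)
  · have hy := congr($hSbT y)
    simp only [sub_apply, comp_apply, zero_apply, sub_eq_zero, hSbadj, hTbadj] at hy
    exact hy
end
end
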